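/- Static cell-usage bound for TCO execution: for any core Simplicity expression t : A ⊢ B and value v : A, during the execution of ⟪t⟫_off from the standard initial state, the total number of cells in both stacks never exceeds cellBndTCO(t) := bitSize(A) + bitSize(B) + max(n₁, n₂), where (n₁, n₂) = extraCellBndTCO(t). -/
import Mathlib


inductive Ty : Type
  | unit : Ty
  | sum : Ty → Ty → Ty
  | prod : Ty → Ty → Ty

def Ty.interp : Ty → Type
  | .unit => Unit
  | .sum a b => Sum a.interp b.interp
  | .prod a b => a.interp × b.interp

inductive Term : Ty → Ty → Type
  | iden {A : Ty} : Term A A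
  | comp {A B C : Ty} : Term A B → Term B C → Term A C
  | unit {A : Ty} : Term A .unit
  | injl {A B C : Ty} : Term A B → Term A (.sum B C)
  | injr {A B C : Ty} : Term A C → Term A (.sum B C)
  | case {A B C D : Ty} : Term (.prod A C) D → Term (.prod B C) D →
      Term (.prod (.sum A B) C) D
  | pair {A B C : Ty} : Term A B → Term A C → Term A (.prod B C)
  | take {A B C : Ty} : Term A C → Term (.prod A B) C
  | drop {A B C : Ty} : Term B C → Term (.prod A B) C

def Term.eval : {A B : Ty} → Term A B → A.interp → B.interp
  | _, _, .iden, a => a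
  | _, _, .comp s t, a => t.eval (s.eval a)
  | _, _, .unit, _ => ()
  | _, _, .injl t, a => Sum.inl (t.eval a)
  | _, _, .injr t, a => Sum.inr (t.eval a)
  | _, _, .case s t, x =>
      match x with
      | (Sum.inl a, c) => s.eval (a, c)
      | (Sum.inr b, c) => t.eval (b, c)
  | _, _, .pair s t, a => (s.eval a, t.eval a)
  | _, _, .take t, x => t.eval x.1
  | _, _, .drop t, x => t.eval x.2
def Ty.bitSize : Ty → ℕ
  | .unit => 0
  | .sum a b => 1 + max a.bitSize b.bitSize
  | .prod a b => a.bitSize + b.bitSize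

def padl (a b : Ty) : ℕ := max a.bitSize b.bitSize - a.bitSize
def padr (a b : Ty) : ℕ := max a.bitSize b.bitSize - b.bitSize

abbrev Cell := Option Bool

def Ty.encode : (A : Ty) → A.interp → List Cell
  | .unit, _ => []
  | .sum a b, Sum.inl x => (some false :: List.replicate (padl a b) none) ++ a.encode x
  | .sum a b, Sum.inr y => (some true :: List.replicate (padr a b) none) ++ b.encode y
  | .prod a b, x => a.encode x.1 ++ b.encode x.2
/-- A frame of the Bit Machine: an array of cells together with a cursor. -/
structure Frame where
  cells : List Cell
  cursor : ℕ

/-- A state of the Bit Machine: a stack of read frames and a stack of write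
frames (the head of each list is the active frame). -/
structure MState where
  readStack : List Frame
  writeStack : List Frame

/-- Total number of cells in both stacks. -/
def MState.cellCount (s : MState) : ℕ :=
  (s.readStack.map fun f => f.cells.length).sum +
    (s.writeStack.map fun f => f.cells.length).sum

def nopI (s : MState) : Option MState := some s

def writeI (b : Bool) (s : MState) : Option MState :=
  match s.writeStack with
  | [] => none
  | w :: ws =>
    if w.cells[w.cursor]? = some none then
      some { s with writeStack := ⟨w.cells.set w.cursor (some b), w.cursor + 1⟩ :: ws }
    else none

def copyI (n : ℕ) (s : MState) : Option MState :=
  match s.readStack, s.writeStack with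
  | r :: _, w :: ws =>
    if r.cursor + n ≤ r.cells.length ∧ w.cursor + n ≤ w.cells.length ∧
        ((w.cells.drop w.cursor).take n).all Option.isNone then
      some { s with writeStack :=
        ⟨w.cells.take w.cursor ++ (r.cells.drop r.cursor).take n ++
            w.cells.drop (w.cursor + n),
          w.cursor + n⟩ :: ws }
    else none
  | _, _ => none

def skipI (n : ℕ) (s : MState) : Option MState :=
  match s.writeStack with
  | [] => none
  | w :: ws =>
    if w.cursor + n ≤ w.cells.length then
      some { s with writeStack := ⟨w.cells, w.cursor + n⟩ :: ws }
    else none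

def fwdI (n : ℕ) (s : MState) : Option MState :=
  match s.readStack with
  | [] => none
  | r :: rs =>
    if r.cursor + n ≤ r.cells.length then
      some { s with readStack := ⟨r.cells, r.cursor + n⟩ :: rs }
    else none

def bwdI (n : ℕ) (s : MState) : Option MState :=
  match s.readStack with
  | [] => none
  | r :: rs =>
    if n ≤ r.cursor then
      some { s with readStack := ⟨r.cells, r.cursor - n⟩ :: rs }
    else none

def newFrameI (n : ℕ) (s : MState) : Option MState :=
  some { s with writeStack := ⟨List.replicate n none, 0⟩ :: s.writeStack }

def moveFrameI (s : MState) : Option MState :=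
  match s.writeStack with
  | w :: w' :: ws =>
    some { readStack := ⟨w.cells, 0⟩ :: s.readStack, writeStack := w' :: ws }
  | _ => none

def dropFrameI (s : MState) : Option MState :=
  match s.readStack with
  | _ :: r :: rs => some { s with readStack := r :: rs }
  | _ => none

/-- The `read` instruction: returns the bit under the active read frame's
cursor, crashing on an undefined cell or an out-of-range cursor. -/
def readI (s : MState) : Option Bool :=
  match s.readStack with
  | r :: _ =>
    match r.cells[r.cursor]? with
    | some (some b) => some b
    | _ => none
  | [] => none

/-- A run of the machine: from a state, either crash, or produce the final
state together with the maximum of `MState.cellCount` over all states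
encountered during execution (including the initial and final ones). -/
abbrev Run := MState → Option (MState × ℕ)

def instr (f : MState → Option MState) : Run := fun s =>
  (f s).map fun s' => (s', max s.cellCount s'.cellCount)

def seqRun (p q : Run) : Run := fun s => do
  let (s₁, n₁) ← p s
  let (s₂, n₂) ← q s₁
  pure (s₂, max n₁ n₂)

/-- Translation of core Simplicity to the Bit Machine: `runCore t` is the
state transformation (with cell-usage tracking) of executing `⟪t⟫`. -/
def runCore : {A B : Ty} → Term A B → Run
  | A, _, .iden => instr (copyI A.bitSize)
  | _, _, @Term.comp _ B _ s t =>
      seqRun (instr (newFrameI B.bitSize))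
        (seqRun (runCore s)
          (seqRun (instr moveFrameI)
            (seqRun (runCore t) (instr dropFrameI))))
  | _, _, .unit => instr nopI
  | _, _, @Term.injl _ B C t =>
      seqRun (instr (writeI false)) (seqRun (instr (skipI (padl B C))) (runCore t))
  | _, _, @Term.injr _ B C t =>
      seqRun (instr (writeI true)) (seqRun (instr (skipI (padr B C))) (runCore t))
  | _, _, @Term.case A B _ _ s t => fun st =>
      match readI st with
      | some false =>
          seqRun (instr (fwdI (1 + padl A B)))
            (seqRun (runCore s) (instr (bwdI (1 + padl A B)))) st
      | some true =>
          seqRun (instr (fwdI (1 + padr A B)))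
            (seqRun (runCore t) (instr (bwdI (1 + padr A B)))) st
      | none => none
  | _, _, .pair s t => seqRun (runCore s) (runCore t)
  | _, _, .take t => runCore t
  | _, _, @Term.drop A _ _ t =>
      seqRun (instr (fwdI A.bitSize)) (seqRun (runCore t) (instr (bwdI A.bitSize)))

/-- The standard initial state for evaluating `t : A ⊢ B` on input `v`. -/
def initState (A B : Ty) (v : A.interp) : MState :=
  { readStack := [⟨A.encode v, 0⟩],
    writeStack := [⟨List.replicate B.bitSize none, 0⟩] }

/-- The expected final state after evaluating `t : A ⊢ B` on input `v`
with output `w`. -/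
def finalState (A B : Ty) (v : A.interp) (w : B.interp) : MState :=
  { readStack := [⟨A.encode v, 0⟩],
    writeStack := [⟨B.encode w, B.bitSize⟩] }

/-- The TCO translation of core Simplicity to the Bit Machine.
`runTCO t false` is `⟪t⟫_off` and `runTCO t true` is `⟪t⟫_on`. -/
def runTCO : {A B : Ty} → Term A B → Bool → Run
  | A, _, .iden, tail =>
      if tail then seqRun (instr (copyI A.bitSize)) (instr dropFrameI)
      else instr (copyI A.bitSize)
  | _, _, @Term.comp _ B _ s t, tail =>
      seqRun (instr (newFrameI B.bitSize))
        (seqRun (runTCO s tail) (seqRun (instr moveFrameI) (runTCO t true)))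
  | _, _, .unit, tail => if tail then instr dropFrameI else instr nopI
  | _, _, @Term.injl _ B C t, tail =>
      seqRun (instr (writeI false)) (seqRun (instr (skipI (padl B C))) (runTCO t tail))
  | _, _, @Term.injr _ B C t, tail =>
      seqRun (instr (writeI true)) (seqRun (instr (skipI (padr B C))) (runTCO t tail))
  | _, _, @Term.case A B _ _ s t, tail => fun st =>
      match readI st with
      | some false =>
          if tail then seqRun (instr (fwdI (1 + padl A B))) (runTCO s true) st
          else
            seqRun (instr (fwdI (1 + padl A B)))
              (seqRun (runTCO s false) (instr (bwdI (1 + padl A B)))) st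
      | some true =>
          if tail then seqRun (instr (fwdI (1 + padr A B))) (runTCO t true) st
          else
            seqRun (instr (fwdI (1 + padr A B)))
              (seqRun (runTCO t false) (instr (bwdI (1 + padr A B)))) st
      | none => none
  | _, _, .pair s t, tail => seqRun (runTCO s false) (runTCO t tail)
  | _, _, .take t, tail => runTCO t tail
  | _, _, @Term.drop A _ _ t, tail =>
      if tail then seqRun (instr (fwdI A.bitSize)) (runTCO t true)
      else
        seqRun (instr (fwdI A.bitSize))
          (seqRun (runTCO t false) (instr (bwdI A.bitSize)))

def extraCellBndTCO : {A B : Ty} → Term A B → ℕ × ℕ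
  | _, _, .iden => (0, 0)
  | _, _, @Term.comp _ B _ s t =>
      let n := extraCellBndTCO s
      let m := extraCellBndTCO t
      let b := B.bitSize
      (max (b + n.1) (max m.1 (b + m.2)), b + n.2)
  | _, _, .unit => (0, 0)
  | _, _, .injl t => extraCellBndTCO t
  | _, _, .injr t => extraCellBndTCO t
  | _, _, .case s t =>
      let n := extraCellBndTCO s
      let m := extraCellBndTCO t
      (max n.1 m.1, max n.2 m.2)
  | _, _, .pair s t =>
      let n := extraCellBndTCO s
      let m := extraCellBndTCO t
      (m.1, max n.1 (max n.2 m.2))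
  | _, _, .take t => extraCellBndTCO t
  | _, _, .drop t => extraCellBndTCO t

def cellBndTCO {A B : Ty} (t : Term A B) : ℕ :=
  A.bitSize + B.bitSize + max (extraCellBndTCO t).1 (extraCellBndTCO t).2


/-! ### Auxiliary lemmas -/

def flen (f : Frame) : ℕ := f.cells.length

lemma cellCount_def (s : MState) :
    s.cellCount = (s.readStack.map flen).sum + (s.writeStack.map flen).sum := rfl

lemma instr_some {f : MState → Option MState} {s0 s' : MState} {n : ℕ}
    (h : instr f s0 = some (s', n)) :
    f s0 = some s' ∧ n = max s0.cellCount s'.cellCount := by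
  unfold instr at h
  cases hf : f s0 with
  | none => rw [hf] at h; simp at h
  | some a =>
    rw [hf] at h
    simp only [Option.map_some, Option.some_inj, Prod.mk.injEq] at h
    obtain ⟨rfl, rfl⟩ := h
    exact ⟨rfl, rfl⟩

lemma seqRun_some {p q : Run} {s0 s' : MState} {n : ℕ}
    (h : seqRun p q s0 = some (s', n)) :
    ∃ s1 n1 n2, p s0 = some (s1, n1) ∧ q s1 = some (s', n2) ∧ n = max n1 n2 := by
  unfold seqRun at h
  cases hp : p s0 with
  | none => rw [hp] at h; simp at h
  | some a =>
    obtain ⟨s1, n1⟩ := a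
    rw [hp] at h
    simp only [Option.bind_eq_bind, Option.bind_some] at h
    cases hq : q s1 with
    | none => rw [hq] at h; simp at h
    | some b =>
      obtain ⟨s2, n2⟩ := b
      rw [hq] at h
      simp only [Option.bind_some, Option.some_inj, Prod.mk.injEq, pure] at h
      obtain ⟨rfl, rfl⟩ := h
      exact ⟨s1, n1, n2, rfl, hq, rfl⟩

lemma nopI_spec {s0 s' : MState} (h : nopI s0 = some s') : s' = s0 := by
  simpa [nopI] using h.symm

lemma writeI_spec {b : Bool} {s0 s' : MState} (h : writeI b s0 = some s') :
    s'.readStack = s0.readStack ∧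
    s'.writeStack.map flen = s0.writeStack.map flen := by
  unfold writeI at h
  split at h
  · cases h
  · split at h
    · rename_i w ws hW _
      injection h with h
      subst h
      simp [hW, flen]
    · cases h

lemma copyI_spec {m : ℕ} {s0 s' : MState} (h : copyI m s0 = some s') :
    s'.readStack = s0.readStack ∧
    s'.writeStack.map flen = s0.writeStack.map flen := by
  unfold copyI at h
  split at h
  · rename_i r rs w ws hR hW
    split at h
    · rename_i hcond
      injection h with h
      subst h
      refine ⟨rfl, ?_⟩
      simp only [hW, List.map_cons, flen]
      congr 1
      simp only [List.length_append, List.length_take, List.length_drop]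
      omega
    · cases h
  · cases h

lemma skipI_spec {m : ℕ} {s0 s' : MState} (h : skipI m s0 = some s') :
    s'.readStack = s0.readStack ∧
    s'.writeStack.map flen = s0.writeStack.map flen := by
  unfold skipI at h
  split at h
  · cases h
  · split at h
    · rename_i w ws hW _
      injection h with h
      subst h
      simp [hW, flen]
    · cases h

lemma fwdI_spec {m : ℕ} {s0 s' : MState} (h : fwdI m s0 = some s') :
    s'.readStack.map flen = s0.readStack.map flen ∧
    s'.writeStack = s0.writeStack := by
  unfold fwdI at h
  split at h
  · cases h
  · split at h
    · rename_i r rs hR _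
      injection h with h
      subst h
      simp [hR, flen]
    · cases h

lemma bwdI_spec {m : ℕ} {s0 s' : MState} (h : bwdI m s0 = some s') :
    s'.readStack.map flen = s0.readStack.map flen ∧
    s'.writeStack = s0.writeStack := by
  unfold bwdI at h
  split at h
  · cases h
  · split at h
    · rename_i r rs hR _
      injection h with h
      subst h
      simp [hR, flen]
    · cases h

lemma newFrameI_spec {m : ℕ} {s0 s' : MState} (h : newFrameI m s0 = some s') :
    s'.readStack = s0.readStack ∧
    s'.writeStack.map flen = m :: s0.writeStack.map flen := by
  unfold newFrameI at h
  injection h with h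
  subst h
  simp [flen]

lemma moveFrameI_spec {s0 s' : MState} (h : moveFrameI s0 = some s') :
    ∃ w w' ws, s0.writeStack = w :: w' :: ws ∧
      s'.readStack = ⟨w.cells, 0⟩ :: s0.readStack ∧
      s'.writeStack = w' :: ws := by
  unfold moveFrameI at h
  split at h
  · rename_i w w' ws hW
    injection h with h
    subst h
    exact ⟨w, w', ws, hW, rfl, rfl⟩
  · cases h

lemma dropFrameI_spec {s0 s' : MState} (h : dropFrameI s0 = some s') :
    ∃ a rest, s0.readStack = a :: rest ∧
      s'.readStack = rest ∧ s'.writeStack = s0.writeStack := by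
  unfold dropFrameI at h
  split at h
  · rename_i a r rs hR
    injection h with h
    subst h
    exact ⟨a, r :: rs, hR, rfl, rfl⟩
  · cases h

lemma cellCount_of_maps {s s' : MState}
    (hr : s'.readStack.map flen = s.readStack.map flen)
    (hw : s'.writeStack.map flen = s.writeStack.map flen) :
    s'.cellCount = s.cellCount := by
  rw [cellCount_def, cellCount_def, hr, hw]

def Eb {A B : Ty} (t : Term A B) : ℕ × ℕ := extraCellBndTCO t

lemma encode_length : ∀ (A : Ty) (v : A.interp), (A.encode v).length = A.bitSize
  | .unit, _ => rfl
  | .sum a b, Sum.inl x => by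
      have := encode_length a x
      simp [Ty.encode, Ty.bitSize, this, padl]
      omega
  | .sum a b, Sum.inr y => by
      have := encode_length b y
      simp [Ty.encode, Ty.bitSize, this, padr]
      omega
  | .prod a b, x => by
      have h1 := encode_length a x.1
      have h2 := encode_length b x.2
      simp [Ty.encode, Ty.bitSize, h1, h2]

set_option maxHeartbeats 2000000 in
lemma main_bound : ∀ {A B : Ty} (t : Term A B),
    (∀ s0 s' n, runTCO t false s0 = some (s', n) →
      s'.readStack.map flen = s0.readStack.map flen ∧
      s'.writeStack.map flen = s0.writeStack.map flen ∧
      n ≤ s0.cellCount + max (extraCellBndTCO t).1 (extraCellBndTCO t).2) ∧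
    (∀ s0 s' n, runTCO t true s0 = some (s', n) →
      s'.readStack.map flen = (s0.readStack.map flen).tail ∧
      s'.writeStack.map flen = s0.writeStack.map flen ∧
      n ≤ max (s0.cellCount + (extraCellBndTCO t).2)
            (s'.cellCount + (extraCellBndTCO t).1)) := by
  intro A B t
  induction t with
  | @iden A =>
    constructor
    · intro s0 s' n h
      simp only [runTCO] at h
      rw [if_neg Bool.false_ne_true] at h
      obtain ⟨hf, rfl⟩ := instr_some h
      obtain ⟨hr, hw⟩ := copyI_spec hf
      have hr' : s'.readStack.map flen = s0.readStack.map flen := by rw [hr]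
      have hc := cellCount_of_maps hr' hw
      refine ⟨hr', hw, ?_⟩
      simp only [extraCellBndTCO]
      omega
    · intro s0 s' n h
      simp only [runTCO] at h
      rw [if_pos trivial] at h
      obtain ⟨s1, n1, n2, h1, h2, rfl⟩ := seqRun_some h
      obtain ⟨hf1, rfl⟩ := instr_some h1
      obtain ⟨hr1, hw1⟩ := copyI_spec hf1
      obtain ⟨hf2, rfl⟩ := instr_some h2
      obtain ⟨a, rest, hR, hr2, hw2⟩ := dropFrameI_spec hf2
      have hR0 : s0.readStack = a :: rest := hr1 ▸ hR
      have e0 : s0.cellCount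
          = flen a + (rest.map flen).sum + (s0.writeStack.map flen).sum := by
        rw [cellCount_def, hR0, List.map_cons, List.sum_cons]
      have e1 : s1.cellCount = s0.cellCount :=
        cellCount_of_maps (by rw [hr1]) hw1
      have e2 : s'.cellCount
          = (rest.map flen).sum + (s0.writeStack.map flen).sum := by
        rw [cellCount_def, hr2, hw2, hw1]
      refine ⟨by rw [hr2, hR0]; rfl, by rw [hw2, hw1], ?_⟩
      simp only [extraCellBndTCO]
      omega
  | @comp A BB C s t ihs iht =>
    have key : ∀ (tail : Bool) s0 s' n,
        runTCO (Term.comp s t) tail s0 = some (s', n) →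
        ∃ s1 s2 s3 na nb nc nd,
          newFrameI BB.bitSize s0 = some s1 ∧ na = max s0.cellCount s1.cellCount ∧
          runTCO s tail s1 = some (s2, nb) ∧
          moveFrameI s2 = some s3 ∧ nc = max s2.cellCount s3.cellCount ∧
          runTCO t true s3 = some (s', nd) ∧
          n = max na (max nb (max nc nd)) := by
      intro tail s0 s' n h
      simp only [runTCO] at h
      obtain ⟨s1, na, m1, h1, hrest, rfl⟩ := seqRun_some h
      obtain ⟨s2, nb, m2, h2, hrest2, rfl⟩ := seqRun_some hrest
      obtain ⟨s3, nc, nd, h3, h4, rfl⟩ := seqRun_some hrest2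
      obtain ⟨hf1, rfl⟩ := instr_some h1
      obtain ⟨hf3, rfl⟩ := instr_some h3
      exact ⟨s1, s2, s3, _, nb, _, nd, hf1, rfl, h2, hf3, rfl, h4, rfl⟩
    constructor
    · intro s0 s' n h
      obtain ⟨s1, s2, s3, na, nb, nc, nd, hf1, hna, h2, hf3, hnc, h4, rfl⟩ :=
        key false s0 s' n h
      obtain ⟨hr1, hw1⟩ := newFrameI_spec hf1
      obtain ⟨hr2, hw2, hb2⟩ := ihs.1 s1 s2 nb h2
      obtain ⟨w, w', ws, hW2, hr3, hw3⟩ := moveFrameI_spec hf3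
      obtain ⟨hr4, hw4, hb4⟩ := iht.2 s3 s' nd h4
      have hw2' : List.map flen (w :: w' :: ws)
          = BB.bitSize :: s0.writeStack.map flen := by
        rw [← hW2, hw2, hw1]
      rw [List.map_cons] at hw2'
      injection hw2' with hwb hws
      have hrm1 : s1.readStack.map flen = s0.readStack.map flen := by rw [hr1]
      have hrm3 : s3.readStack.map flen = flen w :: s2.readStack.map flen := by
        rw [hr3, List.map_cons]; rfl
      have e0 := cellCount_def s0
      have e1 : s1.cellCount = s0.cellCount + BB.bitSize := by
        rw [cellCount_def, hrm1, hw1, List.sum_cons, e0]; omega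
      have e2 : s2.cellCount = s1.cellCount := cellCount_of_maps hr2 hw2
      have e3 : s3.cellCount = s0.cellCount + BB.bitSize := by
        rw [cellCount_def, hrm3, List.sum_cons, hwb, hr2, hrm1, hw3, hws, e0]
        omega
      have hrm4 : s'.readStack.map flen = s0.readStack.map flen := by
        rw [hr4, hrm3, List.tail_cons, hr2, hrm1]
      have hwm4 : s'.writeStack.map flen = s0.writeStack.map flen := by
        rw [hw4, hw3, hws]
      have e4 : s'.cellCount = s0.cellCount := by
        rw [cellCount_def, hrm4, hwm4, e0]
      refine ⟨hrm4, hwm4, ?_⟩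
      rw [e4] at hb4
      simp only [extraCellBndTCO] at hb2 hb4 ⊢
      omega
    · intro s0 s' n h
      obtain ⟨s1, s2, s3, na, nb, nc, nd, hf1, hna, h2, hf3, hnc, h4, rfl⟩ :=
        key true s0 s' n h
      obtain ⟨hr1, hw1⟩ := newFrameI_spec hf1
      obtain ⟨hr2, hw2, hb2⟩ := ihs.2 s1 s2 nb h2
      obtain ⟨w, w', ws, hW2, hr3, hw3⟩ := moveFrameI_spec hf3
      obtain ⟨hr4, hw4, hb4⟩ := iht.2 s3 s' nd h4
      have hw2' : List.map flen (w :: w' :: ws)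
          = BB.bitSize :: s0.writeStack.map flen := by
        rw [← hW2, hw2, hw1]
      rw [List.map_cons] at hw2'
      injection hw2' with hwb hws
      have hrm2 : s2.readStack.map flen = (s0.readStack.map flen).tail := by
        rw [hr2, hr1]
      have hrm3 : s3.readStack.map flen = flen w :: s2.readStack.map flen := by
        rw [hr3, List.map_cons]; rfl
      have hrm4 : s'.readStack.map flen = (s0.readStack.map flen).tail := by
        rw [hr4, hrm3, List.tail_cons, hrm2]
      have hwm4 : s'.writeStack.map flen = s0.writeStack.map flen := by
        rw [hw4, hw3, hws]
      have e0 := cellCount_def s0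
      have e1 : s1.cellCount = s0.cellCount + BB.bitSize := by
        rw [cellCount_def, hr1, hw1, List.sum_cons, e0]; omega
      have e2 : s2.cellCount
          = ((s0.readStack.map flen).tail).sum + BB.bitSize
            + (s0.writeStack.map flen).sum := by
        rw [cellCount_def, hrm2, hw2, hw1, List.sum_cons]; omega
      have e3 : s3.cellCount = s2.cellCount := by
        rw [cellCount_def, hrm3, List.sum_cons, hwb, hw3, hws, e2, hrm2]
        omega
      have e4 : s'.cellCount
          = ((s0.readStack.map flen).tail).sum
            + (s0.writeStack.map flen).sum := by
        rw [cellCount_def, hrm4, hwm4]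
      refine ⟨hrm4, hwm4, ?_⟩
      rw [e4] at hb4
      simp only [extraCellBndTCO] at hb2 hb4 ⊢
      omega
  | unit =>
    constructor
    · intro s0 s' n h
      simp only [runTCO] at h
      rw [if_neg Bool.false_ne_true] at h
      obtain ⟨hf, rfl⟩ := instr_some h
      have := nopI_spec hf
      subst this
      refine ⟨rfl, rfl, ?_⟩
      simp only [extraCellBndTCO]
      omega
    · intro s0 s' n h
      simp only [runTCO] at h
      rw [if_pos trivial] at h
      obtain ⟨hf, rfl⟩ := instr_some h
      obtain ⟨a, rest, hR, hr, hw⟩ := dropFrameI_spec hf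
      have e0 : s0.cellCount
          = flen a + (rest.map flen).sum + (s0.writeStack.map flen).sum := by
        rw [cellCount_def, hR, List.map_cons, List.sum_cons]
      have e1 : s'.cellCount
          = (rest.map flen).sum + (s0.writeStack.map flen).sum := by
        rw [cellCount_def, hr, hw]
      refine ⟨by rw [hr, hR]; rfl, by rw [hw], ?_⟩
      simp only [extraCellBndTCO]
      omega
  | @injl A BB C t ih =>
    have key : ∀ (tail : Bool) s0 s' n,
        runTCO (Term.injl (C := C) t) tail s0 = some (s', n) →
        ∃ s1 s2 na nc nd,
          writeI false s0 = some s1 ∧ na = max s0.cellCount s1.cellCount ∧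
          skipI (padl BB C) s1 = some s2 ∧ nc = max s1.cellCount s2.cellCount ∧
          runTCO t tail s2 = some (s', nd) ∧
          n = max na (max nc nd) := by
      intro tail s0 s' n h
      simp only [runTCO] at h
      obtain ⟨s1, na, m1, h1, hrest, rfl⟩ := seqRun_some h
      obtain ⟨s2, nc, nd, h2, h3, rfl⟩ := seqRun_some hrest
      obtain ⟨hf1, rfl⟩ := instr_some h1
      obtain ⟨hf2, rfl⟩ := instr_some h2
      exact ⟨s1, s2, _, _, nd, hf1, rfl, hf2, rfl, h3, rfl⟩
    constructor
    · intro s0 s' n h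
      obtain ⟨s1, s2, na, nc, nd, hf1, hna, hf2, hnc, h3, rfl⟩ := key false s0 s' n h
      obtain ⟨hr1, hw1⟩ := writeI_spec hf1
      obtain ⟨hr2, hw2⟩ := skipI_spec hf2
      obtain ⟨hr3, hw3, hb3⟩ := ih.1 s2 s' nd h3
      have e1 : s1.cellCount = s0.cellCount := cellCount_of_maps (by rw [hr1]) hw1
      have e2 : s2.cellCount = s1.cellCount := cellCount_of_maps (by rw [hr2]) hw2
      refine ⟨by rw [hr3, hr2, hr1], by rw [hw3, hw2, hw1], ?_⟩
      simp only [extraCellBndTCO] at hb3 ⊢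
      omega
    · intro s0 s' n h
      obtain ⟨s1, s2, na, nc, nd, hf1, hna, hf2, hnc, h3, rfl⟩ := key true s0 s' n h
      obtain ⟨hr1, hw1⟩ := writeI_spec hf1
      obtain ⟨hr2, hw2⟩ := skipI_spec hf2
      obtain ⟨hr3, hw3, hb3⟩ := ih.2 s2 s' nd h3
      have e1 : s1.cellCount = s0.cellCount := cellCount_of_maps (by rw [hr1]) hw1
      have e2 : s2.cellCount = s1.cellCount := cellCount_of_maps (by rw [hr2]) hw2
      refine ⟨by rw [hr3, hr2, hr1], by rw [hw3, hw2, hw1], ?_⟩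
      simp only [extraCellBndTCO] at hb3 ⊢
      omega
  | @injr A BB C t ih =>
    have key : ∀ (tail : Bool) s0 s' n,
        runTCO (Term.injr (B := BB) t) tail s0 = some (s', n) →
        ∃ s1 s2 na nc nd,
          writeI true s0 = some s1 ∧ na = max s0.cellCount s1.cellCount ∧
          skipI (padr BB C) s1 = some s2 ∧ nc = max s1.cellCount s2.cellCount ∧
          runTCO t tail s2 = some (s', nd) ∧
          n = max na (max nc nd) := by
      intro tail s0 s' n h
      simp only [runTCO] at h
      obtain ⟨s1, na, m1, h1, hrest, rfl⟩ := seqRun_some h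
      obtain ⟨s2, nc, nd, h2, h3, rfl⟩ := seqRun_some hrest
      obtain ⟨hf1, rfl⟩ := instr_some h1
      obtain ⟨hf2, rfl⟩ := instr_some h2
      exact ⟨s1, s2, _, _, nd, hf1, rfl, hf2, rfl, h3, rfl⟩
    constructor
    · intro s0 s' n h
      obtain ⟨s1, s2, na, nc, nd, hf1, hna, hf2, hnc, h3, rfl⟩ := key false s0 s' n h
      obtain ⟨hr1, hw1⟩ := writeI_spec hf1
      obtain ⟨hr2, hw2⟩ := skipI_spec hf2
      obtain ⟨hr3, hw3, hb3⟩ := ih.1 s2 s' nd h3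
      have e1 : s1.cellCount = s0.cellCount := cellCount_of_maps (by rw [hr1]) hw1
      have e2 : s2.cellCount = s1.cellCount := cellCount_of_maps (by rw [hr2]) hw2
      refine ⟨by rw [hr3, hr2, hr1], by rw [hw3, hw2, hw1], ?_⟩
      simp only [extraCellBndTCO] at hb3 ⊢
      omega
    · intro s0 s' n h
      obtain ⟨s1, s2, na, nc, nd, hf1, hna, hf2, hnc, h3, rfl⟩ := key true s0 s' n h
      obtain ⟨hr1, hw1⟩ := writeI_spec hf1
      obtain ⟨hr2, hw2⟩ := skipI_spec hf2
      obtain ⟨hr3, hw3, hb3⟩ := ih.2 s2 s' nd h3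
      have e1 : s1.cellCount = s0.cellCount := cellCount_of_maps (by rw [hr1]) hw1
      have e2 : s2.cellCount = s1.cellCount := cellCount_of_maps (by rw [hr2]) hw2
      refine ⟨by rw [hr3, hr2, hr1], by rw [hw3, hw2, hw1], ?_⟩
      simp only [extraCellBndTCO] at hb3 ⊢
      omega
  | @case A BB C D s t ihs iht =>
    constructor
    · intro s0 s' n h
      simp only [runTCO] at h
      cases hread : readI s0 with
      | none => rw [hread] at h; cases h
      | some bit =>
        rw [hread] at h
        cases bit with
        | false =>
          rw [if_neg Bool.false_ne_true] at h
          obtain ⟨s1, na, m1, h1, hrest, rfl⟩ := seqRun_some h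
          obtain ⟨s2, nb, nc, h2, h3, rfl⟩ := seqRun_some hrest
          obtain ⟨hf1, rfl⟩ := instr_some h1
          obtain ⟨hr1, hw1⟩ := fwdI_spec hf1
          obtain ⟨hr2, hw2, hb2⟩ := ihs.1 s1 s2 nb h2
          obtain ⟨hf3, rfl⟩ := instr_some h3
          obtain ⟨hr3, hw3⟩ := bwdI_spec hf3
          have e1 : s1.cellCount = s0.cellCount :=
            cellCount_of_maps hr1 (by rw [hw1])
          have e2 : s2.cellCount = s1.cellCount := cellCount_of_maps hr2 hw2
          have e3 : s'.cellCount = s2.cellCount :=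
            cellCount_of_maps hr3 (by rw [hw3])
          refine ⟨by rw [hr3, hr2, hr1], by rw [hw3, hw2, hw1], ?_⟩
          simp only [extraCellBndTCO] at hb2 ⊢
          omega
        | true =>
          rw [if_neg Bool.false_ne_true] at h
          obtain ⟨s1, na, m1, h1, hrest, rfl⟩ := seqRun_some h
          obtain ⟨s2, nb, nc, h2, h3, rfl⟩ := seqRun_some hrest
          obtain ⟨hf1, rfl⟩ := instr_some h1
          obtain ⟨hr1, hw1⟩ := fwdI_spec hf1
          obtain ⟨hr2, hw2, hb2⟩ := iht.1 s1 s2 nb h2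
          obtain ⟨hf3, rfl⟩ := instr_some h3
          obtain ⟨hr3, hw3⟩ := bwdI_spec hf3
          have e1 : s1.cellCount = s0.cellCount :=
            cellCount_of_maps hr1 (by rw [hw1])
          have e2 : s2.cellCount = s1.cellCount := cellCount_of_maps hr2 hw2
          have e3 : s'.cellCount = s2.cellCount :=
            cellCount_of_maps hr3 (by rw [hw3])
          refine ⟨by rw [hr3, hr2, hr1], by rw [hw3, hw2, hw1], ?_⟩
          simp only [extraCellBndTCO] at hb2 ⊢
          omega
    · intro s0 s' n h
      simp only [runTCO] at h
      cases hread : readI s0 with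
      | none => rw [hread] at h; cases h
      | some bit =>
        rw [hread] at h
        cases bit with
        | false =>
          rw [if_pos trivial] at h
          obtain ⟨s1, na, nb, h1, h2, rfl⟩ := seqRun_some h
          obtain ⟨hf1, rfl⟩ := instr_some h1
          obtain ⟨hr1, hw1⟩ := fwdI_spec hf1
          obtain ⟨hr2, hw2, hb2⟩ := ihs.2 s1 s' nb h2
          have e1 : s1.cellCount = s0.cellCount :=
            cellCount_of_maps hr1 (by rw [hw1])
          refine ⟨by rw [hr2, hr1], by rw [hw2, hw1], ?_⟩
          simp only [extraCellBndTCO] at hb2 ⊢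
          omega
        | true =>
          rw [if_pos trivial] at h
          obtain ⟨s1, na, nb, h1, h2, rfl⟩ := seqRun_some h
          obtain ⟨hf1, rfl⟩ := instr_some h1
          obtain ⟨hr1, hw1⟩ := fwdI_spec hf1
          obtain ⟨hr2, hw2, hb2⟩ := iht.2 s1 s' nb h2
          have e1 : s1.cellCount = s0.cellCount :=
            cellCount_of_maps hr1 (by rw [hw1])
          refine ⟨by rw [hr2, hr1], by rw [hw2, hw1], ?_⟩
          simp only [extraCellBndTCO] at hb2 ⊢
          omega
  | @pair A BB C s t ihs iht =>
    constructor
    · intro s0 s' n h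
      simp only [runTCO] at h
      obtain ⟨s1, na, nb, h1, h2, rfl⟩ := seqRun_some h
      obtain ⟨hr1, hw1, hb1⟩ := ihs.1 s0 s1 na h1
      obtain ⟨hr2, hw2, hb2⟩ := iht.1 s1 s' nb h2
      have e1 : s1.cellCount = s0.cellCount := cellCount_of_maps hr1 hw1
      refine ⟨by rw [hr2, hr1], by rw [hw2, hw1], ?_⟩
      simp only [extraCellBndTCO] at hb1 hb2 ⊢
      omega
    · intro s0 s' n h
      simp only [runTCO] at h
      obtain ⟨s1, na, nb, h1, h2, rfl⟩ := seqRun_some h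
      obtain ⟨hr1, hw1, hb1⟩ := ihs.1 s0 s1 na h1
      obtain ⟨hr2, hw2, hb2⟩ := iht.2 s1 s' nb h2
      have e1 : s1.cellCount = s0.cellCount := cellCount_of_maps hr1 hw1
      refine ⟨by rw [hr2, hr1], by rw [hw2, hw1], ?_⟩
      simp only [extraCellBndTCO] at hb1 hb2 ⊢
      omega
  | take t ih =>
    constructor
    · intro s0 s' n h
      simp only [runTCO] at h
      obtain ⟨hr, hw, hb⟩ := ih.1 s0 s' n h
      exact ⟨hr, hw, by simpa only [extraCellBndTCO] using hb⟩
    · intro s0 s' n h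
      simp only [runTCO] at h
      obtain ⟨hr, hw, hb⟩ := ih.2 s0 s' n h
      exact ⟨hr, hw, by simpa only [extraCellBndTCO] using hb⟩
  | @drop A BB C t ih =>
    constructor
    · intro s0 s' n h
      simp only [runTCO] at h
      rw [if_neg Bool.false_ne_true] at h
      obtain ⟨s1, na, m1, h1, hrest, rfl⟩ := seqRun_some h
      obtain ⟨s2, nb, nc, h2, h3, rfl⟩ := seqRun_some hrest
      obtain ⟨hf1, rfl⟩ := instr_some h1
      obtain ⟨hr1, hw1⟩ := fwdI_spec hf1
      obtain ⟨hr2, hw2, hb2⟩ := ih.1 s1 s2 nb h2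
      obtain ⟨hf3, rfl⟩ := instr_some h3
      obtain ⟨hr3, hw3⟩ := bwdI_spec hf3
      have e1 : s1.cellCount = s0.cellCount := cellCount_of_maps hr1 (by rw [hw1])
      have e2 : s2.cellCount = s1.cellCount := cellCount_of_maps hr2 hw2
      have e3 : s'.cellCount = s2.cellCount := cellCount_of_maps hr3 (by rw [hw3])
      refine ⟨by rw [hr3, hr2, hr1], by rw [hw3, hw2, hw1], ?_⟩
      simp only [extraCellBndTCO] at hb2 ⊢
      omega
    · intro s0 s' n h
      simp only [runTCO] at h
      rw [if_pos trivial] at h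
      obtain ⟨s1, na, nb, h1, h2, rfl⟩ := seqRun_some h
      obtain ⟨hf1, rfl⟩ := instr_some h1
      obtain ⟨hr1, hw1⟩ := fwdI_spec hf1
      obtain ⟨hr2, hw2, hb2⟩ := ih.2 s1 s' nb h2
      have e1 : s1.cellCount = s0.cellCount := cellCount_of_maps hr1 (by rw [hw1])
      refine ⟨by rw [hr2, hr1], by rw [hw2, hw1], ?_⟩
      simp only [extraCellBndTCO] at hb2 ⊢
      omega

theorem runTCO_cell_bound (A B : Ty) (t : Term A B) (v : A.interp)
    (s : MState) (n : ℕ) (h : runTCO t false (initState A B v) = some (s, n)) :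
    n ≤ cellBndTCO t := by
  obtain ⟨-, -, hb⟩ := (main_bound t).1 _ _ _ h
  have hc : (initState A B v).cellCount = A.bitSize + B.bitSize := by
    simp [initState, MState.cellCount, encode_length]
  rw [hc] at hb
  exact hb
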